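/- Let f₁, f₂, f₃ : ℝ → ℝ be differentiable functions satisfying the system of ordinary differential equations f₁'(t) = f₁(t)², f₂'(t) = f₁(t)·f₂(t) and f₃'(t) = f₁(t)·f₃(t) for all t. Define u(η,t) = f₁(t)·log(sinh η) + f₂(t)·log(tanh(η/2)) + f₃(t). Then for every η > 0 and every t ∈ ℝ, u satisfies the nonlinear diffusion equation ∂u/∂t (η,t) = (u(η,t)/sinh η) · ∂/∂η[ sinh η · ∂u/∂η (η,t) ]. -/

import Mathlib

/-!
The ansatz is closed under `u ↦ u · Δ_H u`: the flux `sinh η · ∂_η u` of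
`a log (sinh η) + b log (tanh (η/2)) + c` is `a cosh η + b`, so `Δ_H u = a`. With `a = f₁(t)` the
equation becomes `∂ₜu = f₁ u`, which is exactly what the three ODEs give coefficientwise.
-/

open Real Filter

lemma hasDerivAt_log_sinh {s : ℝ} (hs : s ≠ 0) :
    HasDerivAt (fun r => log (sinh r)) (cosh s / sinh s) s :=
  (hasDerivAt_sinh s).log (sinh_ne_zero.2 hs)

lemma hasDerivAt_log_cosh (s : ℝ) :
    HasDerivAt (fun r => log (cosh r)) (sinh s / cosh s) s :=
  (hasDerivAt_cosh s).log (cosh_pos s).ne'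

lemma hasDerivAt_log_tanh_half {s : ℝ} (hs : s ≠ 0) :
    HasDerivAt (fun r => log (tanh (r / 2))) (1 / sinh s) s := by
  have hsh : sinh (s / 2) ≠ 0 := sinh_ne_zero.2 (by simpa using hs)
  have hch : cosh (s / 2) ≠ 0 := (cosh_pos _).ne'
  have hhalf : HasDerivAt (fun r : ℝ => r / 2) (1 / 2) s := (hasDerivAt_id s).div_const 2
  have hdiff := ((hasDerivAt_log_sinh (by simpa using hs)).comp s hhalf).sub
    ((hasDerivAt_log_cosh (s / 2)).comp s hhalf)
  have hsplit : (fun r => log (sinh (r / 2)) - log (cosh (r / 2)))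
      =ᶠ[nhds s] fun r => log (tanh (r / 2)) := by
    filter_upwards [isOpen_ne.mem_nhds hs] with r hr
    rw [tanh_eq_sinh_div_cosh, log_div (sinh_ne_zero.2 (by simpa using hr)) (cosh_pos _).ne']
  refine (hdiff.congr_of_eventuallyEq hsplit.symm).congr_deriv ?_
  have hsinh : sinh s = 2 * sinh (s / 2) * cosh (s / 2) := by
    rw [← sinh_two_mul]; ring_nf
  rw [hsinh]
  field_simp
  linear_combination cosh_sq_sub_sinh_sq (s / 2)

lemma sinh_mul_deriv_ansatz (a b c : ℝ) {s : ℝ} (hs : s ≠ 0) :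
    sinh s * deriv (fun r => a * log (sinh r) + b * log (tanh (r / 2)) + c) s
      = a * cosh s + b := by
  have h : HasDerivAt (fun r => a * log (sinh r) + b * log (tanh (r / 2)) + c)
      (a * (cosh s / sinh s) + b * (1 / sinh s)) s :=
    (((hasDerivAt_log_sinh hs).const_mul a).add
      ((hasDerivAt_log_tanh_half hs).const_mul b)).add_const c
  rw [h.deriv]
  field_simp [sinh_ne_zero.2 hs]

lemma deriv_sinh_mul_deriv_ansatz (a b c : ℝ) {η : ℝ} (hη : η ≠ 0) :
    deriv (fun s => sinh s * deriv (fun r => a * log (sinh r) + b * log (tanh (r / 2)) + c) s) η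
      = a * sinh η := by
  have hflux : (fun s => sinh s * deriv (fun r => a * log (sinh r) + b * log (tanh (r / 2)) + c) s)
      =ᶠ[nhds η] fun s => a * cosh s + b := by
    filter_upwards [isOpen_ne.mem_nhds hη] with s hs
    exact sinh_mul_deriv_ansatz a b c hs
  rw [hflux.deriv_eq, (((hasDerivAt_cosh η).const_mul a).add_const b).deriv]

lemma deriv_ansatz_time {f₁ f₂ f₃ : ℝ → ℝ} {t : ℝ} (A B : ℝ)
    (hf₁ : HasDerivAt f₁ (f₁ t ^ 2) t) (hf₂ : HasDerivAt f₂ (f₁ t * f₂ t) t)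
    (hf₃ : HasDerivAt f₃ (f₁ t * f₃ t) t) :
    deriv (fun s => f₁ s * A + f₂ s * B + f₃ s) t = f₁ t * (f₁ t * A + f₂ t * B + f₃ t) := by
  have h : HasDerivAt (fun s => f₁ s * A + f₂ s * B + f₃ s)
      (f₁ t ^ 2 * A + f₁ t * f₂ t * B + f₁ t * f₃ t) t :=
    ((hf₁.mul_const A).add (hf₂.mul_const B)).add hf₃
  rw [h.deriv]
  ring

/-- If `f₁' = f₁²`, `f₂' = f₁f₂`, `f₃' = f₁f₃`, then
`u(η,t) = f₁(t)log(sinh η) + f₂(t)log(tanh(η/2)) + f₃(t)` solves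
`∂ₜu = u·Δ_H u` for `η > 0`. -/
theorem stmt_10 (f₁ f₂ f₃ : ℝ → ℝ)
    (hf₁ : Differentiable ℝ f₁) (hf₂ : Differentiable ℝ f₂)
    (hf₃ : Differentiable ℝ f₃)
    (hf₁' : ∀ t : ℝ, deriv f₁ t = (f₁ t) ^ 2)
    (hf₂' : ∀ t : ℝ, deriv f₂ t = f₁ t * f₂ t)
    (hf₃' : ∀ t : ℝ, deriv f₃ t = f₁ t * f₃ t)
    (u : ℝ → ℝ → ℝ)
    (hu : ∀ η t : ℝ, u η t =
      f₁ t * Real.log (Real.sinh η) + f₂ t * Real.log (Real.tanh (η / 2)) + f₃ t) :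
    ∀ η t : ℝ, 0 < η →
      deriv (fun s : ℝ => u η s) t =
        (u η t / Real.sinh η) *
          deriv (fun s : ℝ => Real.sinh s * deriv (fun r : ℝ => u r t) s) η := by
  obtain rfl : u = fun η t =>
      f₁ t * log (sinh η) + f₂ t * log (tanh (η / 2)) + f₃ t := funext₂ hu
  intro η t hη
  have hderiv {f : ℝ → ℝ} (hf : Differentiable ℝ f) {f' : ℝ} (hf' : deriv f t = f') :
      HasDerivAt f f' t := hf' ▸ (hf t).hasDerivAt
  rw [deriv_ansatz_time _ _ (hderiv hf₁ (hf₁' t)) (hderiv hf₂ (hf₂' t)) (hderiv hf₃ (hf₃' t)),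
    deriv_sinh_mul_deriv_ansatz _ _ _ hη.ne']
  field_simp [(sinh_pos_iff.2 hη).ne']
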